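/- arXiv:1810.08356 — 4 statements merged into one kernel-verified Lean document; each statement's English description precedes it below -/
import Mathlib

section
/- Let T1, T2, T3, T4 be the continuous ℚ-algebra endomorphisms of R = ℚ[[x,y]] determined by the substitutions T1 : x ↦ x(1+y)⁻¹, y ↦ y; T2 : x ↦ x, y ↦ y(1+x)⁻¹; T3 : x ↦ x(1+y), y ↦ y; T4 : x ↦ x, y ↦ y(1+x). Then the composite T4 ∘ T3 ∘ T2 ∘ T1 satisfies (T4 ∘ T3 ∘ T2 ∘ T1)(x) = x(1+xy) and (T4 ∘ T3 ∘ T2 ∘ T1)(y) = y(1+xy)⁻¹. -/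
noncomputable section

namespace ScatteringWallCrossing

/-- `R = ℚ[[x,y]]`, formal power series in two variables over `ℚ`. -/
abbrev R : Type := MvPowerSeries (Fin 2) ℚ

/-- The variable `x`. -/
def x : R := MvPowerSeries.X 0

/-- The variable `y`. -/
def y : R := MvPowerSeries.X 1

/-- The coefficientwise topology on `ℚ[[x,y]]`: the product topology on
`((Fin 2) →₀ ℕ) → ℚ` with `ℚ` discrete.  A substitution endomorphism is the unique
*continuous* `ℚ`-algebra endomorphism with the prescribed values on `x` and `y`. -/
def coeffTopology : TopologicalSpace R :=
  @Pi.topologicalSpace ((Fin 2) →₀ ℕ) (fun _ => ℚ) (fun _ => ⊥)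

/-- `T` is a continuous `ℚ`-algebra endomorphism of `R` (for the coefficientwise
topology) sending `x ↦ u` and `y ↦ v`; i.e. `T` is the substitution endomorphism
determined by `x ↦ u`, `y ↦ v`. -/
def IsSubstEndo (T : R →ₐ[ℚ] R) (u v : R) : Prop :=
  @Continuous R R coeffTopology coeffTopology T ∧ T x = u ∧ T y = v

end ScatteringWallCrossing

/-!
Algebra endomorphisms of `ℚ[[x,y]]` commute with inverting series of nonzero constant term,
so the composite sends `x` and `y` to the rational expressions obtained by nested substitution.
These collapse because `1 + x(1 + y(1 + x)) = (1 + x)(1 + xy)`.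
-/

namespace MvPowerSeries

variable {σ τ k l : Type*} [Field k] [Field l]

theorem map_inv_of_constantCoeff_ne_zero {F : Type*}
    [FunLike F (MvPowerSeries σ k) (MvPowerSeries τ l)]
    [RingHomClass F (MvPowerSeries σ k) (MvPowerSeries τ l)] (f : F)
    {φ : MvPowerSeries σ k} (h : constantCoeff φ ≠ 0) : f φ⁻¹ = (f φ)⁻¹ := by
  have hf : constantCoeff (f φ) ≠ 0 :=
    (isUnit_constantCoeff _ ((isUnit_iff_constantCoeff.2 h.isUnit).map f)).ne_zero
  rw [MvPowerSeries.eq_inv_iff_mul_eq_one hf, ← map_mul, MvPowerSeries.inv_mul_cancel _ h,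
    map_one]

end MvPowerSeries

namespace ScatteringWallCrossing

open MvPowerSeries

section PentagonIdentity

variable {σ k : Type*} [Field k] {a b : MvPowerSeries σ k}

/- The images of `x(1 + y(1 + x)⁻¹)⁻¹` and `y(1 + x)⁻¹` (that is, of `x` and `y` under the
first two wall crossings) under `x ↦ a(1 + b(1 + a))`, `y ↦ b(1 + a)`. -/

theorem pentagon_identity_fst (ha : constantCoeff a = 0) (hb : constantCoeff b = 0) :
    a * (1 + b * (1 + a)) * (1 + b * (1 + a) * (1 + a * (1 + b * (1 + a)))⁻¹)⁻¹ =
      a * (1 + a * b) := by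
  have hE : constantCoeff (1 + a * (1 + b * (1 + a))) ≠ 0 := by simp [ha]
  have hD : constantCoeff (1 + b * (1 + a) * (1 + a * (1 + b * (1 + a)))⁻¹) ≠ 0 := by
    simp [hb]
  rw [eq_comm, MvPowerSeries.eq_mul_inv_iff_mul_eq hD]
  linear_combination (a * b) * MvPowerSeries.mul_inv_cancel _ hE

theorem pentagon_identity_snd (ha : constantCoeff a = 0) :
    b * (1 + a) * (1 + a * (1 + b * (1 + a)))⁻¹ = b * (1 + a * b)⁻¹ := by
  have hE : constantCoeff (1 + a * (1 + b * (1 + a))) ≠ 0 := by simp [ha]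
  have hab : constantCoeff (1 + a * b) ≠ 0 := by simp [ha]
  rw [MvPowerSeries.eq_mul_inv_iff_mul_eq hab]
  linear_combination b * MvPowerSeries.inv_mul_cancel _ hE

end PentagonIdentity

theorem constantCoeff_x : constantCoeff x = 0 := constantCoeff_X 0

theorem constantCoeff_y : constantCoeff y = 0 := constantCoeff_X 1

/-- Let `T1, T2, T3, T4` be the continuous substitution endomorphisms of
`ℚ[[x,y]]` given by `T1 : x ↦ x(1+y)⁻¹, y ↦ y`; `T2 : x ↦ x, y ↦ y(1+x)⁻¹`;
`T3 : x ↦ x(1+y), y ↦ y`; `T4 : x ↦ x, y ↦ y(1+x)` (the path-ordered wall crossings of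
the scattering diagram with rays `(±1,0)` carrying `1+x` and `(0,±1)` carrying `1+y`).
Then `(T4 ∘ T3 ∘ T2 ∘ T1)(x) = x(1+xy)` and `(T4 ∘ T3 ∘ T2 ∘ T1)(y) = y(1+xy)⁻¹`,
exhibiting the missing outgoing ray carrying `1+xy`. -/
theorem pathOrderedProduct_four_walls (T1 T2 T3 T4 : R →ₐ[ℚ] R)
    (hT1 : IsSubstEndo T1 (x * (1 + y)⁻¹) y)
    (hT2 : IsSubstEndo T2 x (y * (1 + x)⁻¹))
    (hT3 : IsSubstEndo T3 (x * (1 + y)) y)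
    (hT4 : IsSubstEndo T4 x (y * (1 + x))) :
    (T4.comp (T3.comp (T2.comp T1))) x = x * (1 + x * y) ∧
      (T4.comp (T3.comp (T2.comp T1))) y = y * (1 + x * y)⁻¹ := by
  obtain ⟨-, h1x, h1y⟩ := hT1
  obtain ⟨-, h2x, h2y⟩ := hT2
  obtain ⟨-, h3x, h3y⟩ := hT3
  obtain ⟨-, h4x, h4y⟩ := hT4
  simp only [AlgHom.comp_apply, map_mul, map_add, map_one, h1x, h1y, h2x, h2y, h3x, h3y,
    h4x, h4y, map_inv_of_constantCoeff_ne_zero, constantCoeff_x, constantCoeff_y, zero_mul,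
    add_zero, ne_eq, one_ne_zero, not_false_eq_true]
  exact ⟨pentagon_identity_fst constantCoeff_x constantCoeff_y,
    pentagon_identity_snd constantCoeff_x⟩

end ScatteringWallCrossing
end
end

section
/- Let A = ℚ[x^{±1}, y^{±1}] be the ring of Laurent polynomials in two variables over ℚ (the group algebra of ℤ × ℤ over ℚ), let B = A[t] be the polynomial ring in one further variable t, and let I ⊆ B be the ideal generated by x²y − t and xy² − t. Then the quotient B/I is isomorphic as a ℚ-algebra to the ring ℚ[T^{±1}] of Laurent polynomials in one variable, via the map induced by x ↦ T, y ↦ T, t ↦ T³. -/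
namespace P2Mirror

/-- `A = ℚ[x^{±1}, y^{±1}]`, the group algebra of `ℤ × ℤ` over `ℚ`. -/
noncomputable abbrev A : Type := AddMonoidAlgebra ℚ (ℤ × ℤ)

/-- `B = A[t]`. -/
noncomputable abbrev B : Type := Polynomial A

/-- The Laurent monomial `x`. -/
noncomputable def x : B := Polynomial.C (AddMonoidAlgebra.single ((1, 0) : ℤ × ℤ) (1 : ℚ))

/-- The Laurent monomial `y`. -/
noncomputable def y : B := Polynomial.C (AddMonoidAlgebra.single ((0, 1) : ℤ × ℤ) (1 : ℚ))

/-- The extra variable `t`. -/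
noncomputable def t : B := Polynomial.X

/-- The ideal `I = (x²y − t, xy² − t)` of `B`, generated by the numerators of the partial
derivatives of the superpotential `W = x + y + t/(xy)` of the Landau–Ginzburg mirror to `ℙ²`. -/
noncomputable def I : Ideal B := Ideal.span {x ^ 2 * y - t, x * y ^ 2 - t}

end P2Mirror

/-!
In `B/I` the relations `x²y = t = xy²` force `x = y`, because `xy` is a unit of `B`; hence
`t = x³` and `B/I` is generated by the single unit `x`. So the map `x, y ↦ T`, `t ↦ T³`, which
kills `I`, has the inverse `T ↦ x`.
-/

open AddMonoidAlgebra Multiplicative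

theorem MonoidHom.ext_mint_prod {M : Type*} [Monoid M] {f g : Multiplicative (ℤ × ℤ) →* M}
    (h₁ : f (ofAdd (1, 0)) = g (ofAdd (1, 0))) (h₂ : f (ofAdd (0, 1)) = g (ofAdd (0, 1))) :
    f = g := by
  have hl : f.comp (AddMonoidHom.inl ℤ ℤ).toMultiplicative =
      g.comp (AddMonoidHom.inl ℤ ℤ).toMultiplicative := MonoidHom.ext_mint h₁
  have hr : f.comp (AddMonoidHom.inr ℤ ℤ).toMultiplicative =
      g.comp (AddMonoidHom.inr ℤ ℤ).toMultiplicative := MonoidHom.ext_mint h₂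
  refine MonoidHom.ext fun a => ?_
  have ha : a = ofAdd ((toAdd a).1, 0) * ofAdd ((0, (toAdd a).2) : ℤ × ℤ) := by
    simp [← ofAdd_add]
  rw [ha, map_mul, map_mul]
  exact congr($(DFunLike.congr_fun hl (ofAdd (toAdd a).1)) *
    $(DFunLike.congr_fun hr (ofAdd (toAdd a).2)))

theorem AddMonoidAlgebra.algHom_ext_int_prod {k R : Type*} [CommSemiring k] [Semiring R]
    [Algebra k R] {f g : k[ℤ × ℤ] →ₐ[k] R}
    (h₁ : f (single (1, 0) 1) = g (single (1, 0) 1))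
    (h₂ : f (single (0, 1) 1) = g (single (0, 1) 1)) : f = g :=
  (lift k R (ℤ × ℤ)).symm.injective (MonoidHom.ext_mint_prod h₁ h₂)

theorem AddMonoidAlgebra.algHom_ext_int {k R : Type*} [CommSemiring k] [Semiring R]
    [Algebra k R] {f g : k[ℤ] →ₐ[k] R} (h : f (single 1 1) = g (single 1 1)) : f = g :=
  (lift k R ℤ).symm.injective (MonoidHom.ext_mint h)

namespace P2Mirror

open Polynomial

noncomputable def restrictDiagonal : A →ₐ[ℚ] ℚ[ℤ] :=
  mapDomainAlgHom ℚ ℚ ((AddMonoidHom.id ℤ).coprod (AddMonoidHom.id ℤ))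

theorem restrictDiagonal_single (a : ℤ × ℤ) :
    restrictDiagonal (single a 1) = single (a.1 + a.2) 1 := by
  simp [restrictDiagonal]

noncomputable def toLaurent : B →ₐ[ℚ] ℚ[ℤ] := aevalTower restrictDiagonal (single 3 1)

theorem toLaurent_x : toLaurent x = single 1 1 := by
  simp [toLaurent, x, restrictDiagonal_single]

theorem toLaurent_y : toLaurent y = single 1 1 := by
  simp [toLaurent, y, restrictDiagonal_single]

theorem toLaurent_t : toLaurent t = single 3 1 := by
  simp [toLaurent, t]

theorem I_le_ker_toLaurent : I ≤ RingHom.ker toLaurent := by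
  rw [I, Ideal.span_le, Set.insert_subset_iff, Set.singleton_subset_iff]
  constructor <;>
  · simp only [SetLike.mem_coe, RingHom.mem_ker, map_sub, map_mul, map_pow, toLaurent_x,
      toLaurent_y, toLaurent_t, single_pow, single_mul_single]
    norm_num

theorem x_sub_y_eq_mul :
    x - y = C (single (-1, -1) 1) * ((x ^ 2 * y - t) - (x * y ^ 2 - t)) := by
  simp only [x, y, sub_sub_sub_cancel_right, ← map_pow, ← map_mul, ← map_sub, mul_sub,
    single_pow, single_mul_single]
  norm_num

theorem mk_x_eq_mk_y : Ideal.Quotient.mk I x = Ideal.Quotient.mk I y := by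
  rw [Ideal.Quotient.eq, x_sub_y_eq_mul]
  exact I.mul_mem_left _ (I.sub_mem (Ideal.subset_span (by simp)) (Ideal.subset_span (by simp)))

theorem mk_t_eq_mk_x_pow_three : Ideal.Quotient.mk I t = Ideal.Quotient.mk I x ^ 3 := by
  have h : Ideal.Quotient.mk I (x ^ 2 * y) = Ideal.Quotient.mk I t :=
    Ideal.Quotient.eq.mpr (Ideal.subset_span (by simp))
  rw [← h, map_mul, map_pow, ← mk_x_eq_mk_y]
  ring

noncomputable def quotientToLaurent : B ⧸ I →ₐ[ℚ] ℚ[ℤ] :=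
  Ideal.Quotient.liftₐ I toLaurent fun _ hb ↦ I_le_ker_toLaurent hb

theorem quotientToLaurent_mk (b : B) : quotientToLaurent (Ideal.Quotient.mk I b) = toLaurent b :=
  rfl

noncomputable def laurentToQuotient : ℚ[ℤ] →ₐ[ℚ] B ⧸ I :=
  (Ideal.Quotient.mkₐ ℚ I).comp (CAlgHom.comp (mapDomainAlgHom ℚ ℚ (AddMonoidHom.inl ℤ ℤ)))

theorem laurentToQuotient_single_one :
    laurentToQuotient (single 1 1) = Ideal.Quotient.mk I x := by
  rw [laurentToQuotient, AlgHom.comp_apply, AlgHom.comp_apply, mapDomainAlgHom_apply,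
    mapDomain_single]
  rfl

theorem quotientToLaurent_comp_laurentToQuotient :
    quotientToLaurent.comp laurentToQuotient = AlgHom.id ℚ ℚ[ℤ] :=
  algHom_ext_int <| by
    rw [AlgHom.comp_apply, laurentToQuotient_single_one, quotientToLaurent_mk, toLaurent_x,
      AlgHom.id_apply]

theorem laurentToQuotient_comp_quotientToLaurent :
    laurentToQuotient.comp quotientToLaurent = AlgHom.id ℚ (B ⧸ I) := by
  refine Ideal.Quotient.algHom_ext ℚ (algHom_ext' (algHom_ext_int_prod ?_ ?_) ?_)
  · show laurentToQuotient (toLaurent x) = Ideal.Quotient.mk I x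
    rw [toLaurent_x, laurentToQuotient_single_one]
  · show laurentToQuotient (toLaurent y) = Ideal.Quotient.mk I y
    rw [toLaurent_y, laurentToQuotient_single_one, mk_x_eq_mk_y]
  · show laurentToQuotient (toLaurent t) = Ideal.Quotient.mk I t
    have hT3 : (single 3 1 : ℚ[ℤ]) = single 1 1 ^ 3 := by simp
    rw [toLaurent_t, hT3, map_pow, laurentToQuotient_single_one, mk_t_eq_mk_x_pow_three]

/-- The Jacobian ring `B/I` of the mirror to `ℙ²` is isomorphic as a
`ℚ`-algebra to the Laurent polynomial ring `ℚ[T^{±1}]` via `x ↦ T`, `y ↦ T`, `t ↦ T³`;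
this is the quantum cohomology `ℚ[X, z]/⟨X³ − z⟩` of `ℙ²` with `z` inverted fibrewise. -/
theorem P2_jacobian_ring_iso_laurent :
    ∃ e : (B ⧸ I) ≃ₐ[ℚ] AddMonoidAlgebra ℚ ℤ,
      e (Ideal.Quotient.mk I x) = AddMonoidAlgebra.single (1 : ℤ) (1 : ℚ) ∧
      e (Ideal.Quotient.mk I y) = AddMonoidAlgebra.single (1 : ℤ) (1 : ℚ) ∧
      e (Ideal.Quotient.mk I t) = AddMonoidAlgebra.single (3 : ℤ) (1 : ℚ) :=
  ⟨AlgEquiv.ofAlgHom quotientToLaurent laurentToQuotient quotientToLaurent_comp_laurentToQuotient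
    laurentToQuotient_comp_quotientToLaurent, toLaurent_x, toLaurent_y, toLaurent_t⟩

end P2Mirror
end

section
/- Let G be an additive commutative group, M ⊆ G an additive submonoid, N an additive commutative monoid, and φ : N → G a function with φ(0) = 0 and such that for all p, q ∈ N one has φ(p) + φ(q) − φ(p+q) ∈ M. Then Γ := {(p, g) ∈ N × G : g − φ(p) ∈ M} is an additive submonoid of N × G containing (p, φ(p)) for every p ∈ N and containing (0, m) for every m ∈ M. Moreover, for any field k, in the monoid algebra k[Γ] the elements ϑ_p := z^{(p, φ(p))} satisfy the product rule ϑ_p · ϑ_q = z^{(0, c(p,q))} · ϑ_{p+q}, where c(p,q) = φ(p) + φ(q) − φ(p+q) ∈ M and z^γ denotes the basis element of k[Γ] indexed by γ ∈ Γ. -/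
noncomputable section

namespace ToricTheta

variable {G : Type*} [AddCommGroup G] {N : Type*} [AddCommMonoid N]

/-- The graph monoid `Γ = {(p, g) ∈ N × G : g − φ(p) ∈ M}` of the paper. -/
def graphMonoid (M : AddSubmonoid G) (φ : N → G) (hφ0 : φ 0 = 0)
    (hφ : ∀ p q : N, φ p + φ q - φ (p + q) ∈ M) : AddSubmonoid (N × G) where
  carrier := {pg | pg.2 - φ pg.1 ∈ M}
  zero_mem' := by
    simp only [Set.mem_setOf_eq, Prod.fst_zero, Prod.snd_zero, hφ0, sub_zero]
    exact M.zero_mem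
  add_mem' := by
    intro a b ha hb
    have h := M.add_mem (M.add_mem ha hb) (hφ a.1 b.1)
    have key : (a + b).2 - φ ((a + b).1)
        = a.2 - φ a.1 + (b.2 - φ b.1) + (φ a.1 + φ b.1 - φ (a.1 + b.1)) := by
      simp only [Prod.fst_add, Prod.snd_add]; abel
    simpa only [Set.mem_setOf_eq, key] using h

/-- The theta function `ϑ_p = z^{(p, φ(p))}` in the monoid algebra `k[Γ]`. -/
def theta (k : Type*) [Field k] (M : AddSubmonoid G) (φ : N → G) (hφ0 : φ 0 = 0)
    (hφ : ∀ p q : N, φ p + φ q - φ (p + q) ∈ M) (p : N) :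
    AddMonoidAlgebra k (graphMonoid M φ hφ0 hφ) :=
  AddMonoidAlgebra.single
    ⟨(p, φ p), by
      show φ p - φ p ∈ M
      rw [sub_self]; exact M.zero_mem⟩ 1

section GraphMonoid

variable {M : AddSubmonoid G} {φ : N → G} {hφ0 : φ 0 = 0}
  {hφ : ∀ p q : N, φ p + φ q - φ (p + q) ∈ M}

theorem mem_graphMonoid {pg : N × G} : pg ∈ graphMonoid M φ hφ0 hφ ↔ pg.2 - φ pg.1 ∈ M :=
  Iff.rfl

theorem graph_mem_graphMonoid (p : N) : (p, φ p) ∈ graphMonoid M φ hφ0 hφ := by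
  simp only [mem_graphMonoid, sub_self, M.zero_mem]

theorem zero_prod_mem_graphMonoid {m : G} (hm : m ∈ M) :
    ((0 : N), m) ∈ graphMonoid M φ hφ0 hφ := by
  simpa only [mem_graphMonoid, hφ0, sub_zero] using hm

theorem zero_prod_convexityDefect_mem_graphMonoid (p q : N) :
    ((0 : N), φ p + φ q - φ (p + q)) ∈ graphMonoid M φ hφ0 hφ :=
  zero_prod_mem_graphMonoid (hφ p q)

theorem graph_add_graph (p q : N) :
    (⟨(p, φ p), graph_mem_graphMonoid p⟩ + ⟨(q, φ q), graph_mem_graphMonoid q⟩ :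
        graphMonoid M φ hφ0 hφ) =
      ⟨(0, φ p + φ q - φ (p + q)), zero_prod_convexityDefect_mem_graphMonoid p q⟩ +
        ⟨(p + q, φ (p + q)), graph_mem_graphMonoid (p + q)⟩ :=
  Subtype.ext <| Prod.ext (zero_add _).symm (sub_add_cancel _ _).symm

end GraphMonoid

/-- Let `M ⊆ G` be a submonoid, `φ : N → G` with `φ(0) = 0` and
`φ(p) + φ(q) − φ(p+q) ∈ M` for all `p, q`.  Then the graph monoid
`Γ = {(p,g) : g − φ(p) ∈ M}` (an additive submonoid of `N × G`, see `graphMonoid`)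
contains `(p, φ(p))` for every `p ∈ N` and `(0, m)` for every `m ∈ M`, and in the monoid
algebra `k[Γ]` the theta functions `ϑ_p = z^{(p,φ(p))}` satisfy the product rule
`ϑ_p · ϑ_q = z^{(0, φ(p)+φ(q)−φ(p+q))} · ϑ_{p+q}`.  This is the multiplication rule
`ϑ_P ϑ_Q = z^{c(P,Q)} ϑ_{P+Q}` of the toric mirror construction. -/
theorem theta_product_rule (k : Type*) [Field k]
    (M : AddSubmonoid G) (φ : N → G) (hφ0 : φ 0 = 0)
    (hφ : ∀ p q : N, φ p + φ q - φ (p + q) ∈ M) :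
    (∀ p : N, (p, φ p) ∈ graphMonoid M φ hφ0 hφ) ∧
      (∀ m ∈ M, ((0 : N), m) ∈ graphMonoid M φ hφ0 hφ) ∧
      (∀ p q : N,
        theta k M φ hφ0 hφ p * theta k M φ hφ0 hφ q =
          AddMonoidAlgebra.single
              (⟨((0 : N), φ p + φ q - φ (p + q)), by
                  show φ p + φ q - φ (p + q) - φ 0 ∈ M
                  rw [hφ0, sub_zero]; exact hφ p q⟩ :
                graphMonoid M φ hφ0 hφ) 1 *
            theta k M φ hφ0 hφ (p + q)) := by
  refine ⟨graph_mem_graphMonoid, fun _ => zero_prod_mem_graphMonoid, fun p q => ?_⟩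
  simp only [theta, AddMonoidAlgebra.single_mul_single, one_mul]
  exact congrArg (AddMonoidAlgebra.single · 1) (graph_add_graph p q)

end ToricTheta
end
end

section
/- Let G be an additive commutative group, M ⊆ G an additive submonoid, N an additive commutative monoid, φ : N → G a function with φ(0) = 0 and φ(p) + φ(q) − φ(p+q) ∈ M for all p, q ∈ N, and let Γ = {(p, g) ∈ N × G : g − φ(p) ∈ M}, an additive submonoid of N × G. Let k be a field. Via the monoid embedding M → Γ, m ↦ (0, m), the monoid algebra k[Γ] is an algebra over the monoid algebra k[M], and as a k[M]-module it is free with basis the family {ϑ_p := z^{(p,φ(p))} : p ∈ N}, where z^γ denotes the basis element of k[Γ] indexed by γ ∈ Γ. -/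
/-!
Translation by `(0, m)` makes `Γ` a free `M`-set whose orbits are indexed by `N`: the map
`(p, g) ↦ (p, g - φ p)` identifies `Γ` with `N × M`, with `M` acting on the second factor.
Hence `k[Γ] ≅ k[N × M] ≅ k[M][N]` as `k[M]`-modules, and `ϑ_p = z^(p, φ p)` goes to the standard
basis vector `z^p` because `φ p - φ p = 0`.
-/

noncomputable section

namespace ToricTheta

variable {G : Type*} [AddCommGroup G] {N : Type*} [AddCommMonoid N]

/-- The monoid embedding `M → Γ`, `m ↦ (0, m)`. -/
def inclM (M : AddSubmonoid G) (φ : N → G) (hφ0 : φ 0 = 0)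
    (hφ : ∀ p q : N, φ p + φ q - φ (p + q) ∈ M) :
    M →+ graphMonoid M φ hφ0 hφ where
  toFun m := ⟨((0 : N), (m : G)), by
    show (m : G) - φ 0 ∈ M
    rw [hφ0, sub_zero]; exact m.2⟩
  map_zero' := by ext <;> rfl
  map_add' m m' := by
    apply Subtype.ext
    apply Prod.ext <;> simp

section FreeOrbits

open AddMonoidAlgebra

variable {k : Type*} [CommSemiring k] {M Γ B : Type*} [AddCommMonoid M] [AddCommMonoid Γ]
    [AddMonoid B] (i : M →+ Γ) (e : Γ ≃ B × M)
    (he : ∀ m γ, e (i m + γ) = ((e γ).1, m + (e γ).2))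

def orbitAddEquiv : AddMonoidAlgebra k Γ ≃+ AddMonoidAlgebra (AddMonoidAlgebra k M) B :=
  (mapDomainLinearEquiv k k e).toAddEquiv.trans curryAddEquiv

@[simp]
theorem orbitAddEquiv_single (γ : Γ) (c : k) :
    orbitAddEquiv e (single γ c) = single (e γ).1 (single (e γ).2 c) := by
  simpa [orbitAddEquiv] using curryAddEquiv_single (R := k) (e γ).1 (e γ).2 c

include he in
theorem orbitAddEquiv_mapDomain_mul (r : AddMonoidAlgebra k M) (x : AddMonoidAlgebra k Γ) :
    orbitAddEquiv e (mapDomainRingHom k i r * x) = r • orbitAddEquiv e x := by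
  induction r using induction_linear with
  | zero => simp
  | add r s hr hs => simp only [map_add, add_mul, add_smul, hr, hs]
  | single m c =>
    induction x using induction_linear with
    | zero => simp
    | add x y hx hy => simp only [mul_add, map_add, smul_add, hx, hy]
    | single γ d => simp [single_mul_single, he]

def orbitLinearEquiv :
    letI := (mapDomainRingHom k i).toAlgebra
    AddMonoidAlgebra k Γ ≃ₗ[AddMonoidAlgebra k M] AddMonoidAlgebra (AddMonoidAlgebra k M) B :=
  letI := (mapDomainRingHom k i).toAlgebra
  { orbitAddEquiv e with map_smul' := orbitAddEquiv_mapDomain_mul i e he }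

def orbitBasis :
    letI := (mapDomainRingHom k i).toAlgebra
    Module.Basis B (AddMonoidAlgebra k M) (AddMonoidAlgebra k Γ) :=
  letI := (mapDomainRingHom k i).toAlgebra
  (AddMonoidAlgebra.basis B (AddMonoidAlgebra k M)).map (orbitLinearEquiv i e he).symm

theorem orbitBasis_apply (p : B) : orbitBasis (k := k) i e he p = single (e.symm (p, 0)) 1 := by
  let := (mapDomainRingHom k i).toAlgebra
  rw [orbitBasis, Module.Basis.map_apply, LinearEquiv.symm_apply_eq]
  show _ = orbitAddEquiv (k := k) e _
  simp [one_def]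

end FreeOrbits

section Graph

variable (M : AddSubmonoid G) (φ : N → G) (hφ0 : φ 0 = 0)
    (hφ : ∀ p q : N, φ p + φ q - φ (p + q) ∈ M)

def graphEquiv : graphMonoid M φ hφ0 hφ ≃ N × M where
  toFun γ := (γ.1.1, ⟨γ.1.2 - φ γ.1.1, γ.2⟩)
  invFun pm := ⟨(pm.1, pm.2 + φ pm.1), show (pm.2 : G) + φ pm.1 - φ pm.1 ∈ M by simp⟩
  left_inv γ := by ext <;> simp
  right_inv pm := by ext <;> simp

theorem graphEquiv_inclM_add (m : M) (γ : graphMonoid M φ hφ0 hφ) :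
    graphEquiv M φ hφ0 hφ (inclM M φ hφ0 hφ m + γ) =
      ((graphEquiv M φ hφ0 hφ γ).1, m + (graphEquiv M φ hφ0 hφ γ).2) := by
  ext <;> simp [graphEquiv, inclM, add_sub_assoc]

theorem theta_eq_single_graphEquiv_symm (k : Type*) [Field k] (p : N) :
    theta k M φ hφ0 hφ p = AddMonoidAlgebra.single ((graphEquiv M φ hφ0 hφ).symm (p, 0)) 1 := by
  simp [theta, graphEquiv]

end Graph

/-- With `Γ` the graph monoid of `φ : N → G` relative to `M ⊆ G`, the
monoid algebra `k[Γ]` is an algebra over `k[M]` via the embedding `M → Γ`, `m ↦ (0, m)`,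
and as a `k[M]`-module it is free with basis the theta functions `{ϑ_p : p ∈ N}`.
This is the claim that the theta functions form a `k[NE(S)]`-basis of the ring of
functions on the (uncorrected, toric) mirror family over `Spec k[NE(S)]`. -/
theorem theta_basis (k : Type*) [Field k]
    (M : AddSubmonoid G) (φ : N → G) (hφ0 : φ 0 = 0)
    (hφ : ∀ p q : N, φ p + φ q - φ (p + q) ∈ M) :
    letI : Algebra (AddMonoidAlgebra k M) (AddMonoidAlgebra k (graphMonoid M φ hφ0 hφ)) :=
      (AddMonoidAlgebra.mapDomainRingHom k (inclM M φ hφ0 hφ)).toAlgebra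
    ∃ b : Module.Basis N (AddMonoidAlgebra k M) (AddMonoidAlgebra k (graphMonoid M φ hφ0 hφ)),
      ∀ p : N, b p = theta k M φ hφ0 hφ p :=
  ⟨orbitBasis _ _ (graphEquiv_inclM_add M φ hφ0 hφ), fun p => by
    rw [orbitBasis_apply, theta_eq_single_graphEquiv_symm]⟩

end ToricTheta
end
end
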